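/- Let M be a real symmetric n×n matrix, λ ∈ ℝ, and let F_n = {Y ∈ ℝ^{n×n} : Y symmetric positive semidefinite, 0 ≤ Y_{ij} ≤ 1 for all i,j}. Suppose Ŷ ∈ F_n and U, L ∈ ℝ^{n×n} have all entries nonnegative and satisfy: L_{ij} Ŷ_{ij} = 0 and U_{ij}(Ŷ_{ij} − 1) = 0 for all i, j; M − λI − U + L is negative semidefinite; and (M − λI − U + L)·Ŷ = 0. Then for any Y' ∈ F_n with ⟨M − λI, Y' − Ŷ⟩ = 0, it holds that ⟨L, Y'⟩ = 0. -/

import Mathlib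

open Matrix

/-- Feasible set of the recovery SDP: symmetric PSD matrices with entries in `[0,1]`. -/
def FeasSDP {d : ℕ} (Y : Matrix (Fin d) (Fin d) ℝ) : Prop :=
  Y.PosSemidef ∧ ∀ i j, 0 ≤ Y i j ∧ Y i j ≤ 1

/-- Trace inner product `⟨X, Y⟩ = Σ_{i,j} X_{ij} Y_{ij}`. -/
noncomputable def mip {d : ℕ} (X Y : Matrix (Fin d) (Fin d) ℝ) : ℝ :=
  ∑ i, ∑ j, X i j * Y i j

/-! Write `S = M - λI - U + L`. Then `⟨S, Ŷ⟩ = 0` because `SŶ = 0`, and `⟨S, Y'⟩ ≤ 0` because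
`-S` and `Y'` are positive semidefinite. Expanding `⟨S, Y' - Ŷ⟩ ≤ 0` with `⟨M - λI, Y' - Ŷ⟩ = 0`
and `⟨L, Ŷ⟩ = 0` gives `⟨L, Y'⟩ ≤ ⟨U, Y'⟩ - ⟨U, Ŷ⟩`, which is `≤ 0` since `U ≥ 0` is supported
where `Ŷ = 1 ≥ Y'`. As `L, Y' ≥ 0` entrywise, `⟨L, Y'⟩ = 0`. -/

section mip

variable {d : ℕ}

lemma mip_add_left (X Y Z : Matrix (Fin d) (Fin d) ℝ) : mip (X + Y) Z = mip X Z + mip Y Z := by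
  simp only [mip, Matrix.add_apply, add_mul, Finset.sum_add_distrib]

lemma mip_sub_left (X Y Z : Matrix (Fin d) (Fin d) ℝ) : mip (X - Y) Z = mip X Z - mip Y Z := by
  simp only [mip, Matrix.sub_apply, sub_mul, Finset.sum_sub_distrib]

lemma mip_neg_left (X Y : Matrix (Fin d) (Fin d) ℝ) : mip (-X) Y = -mip X Y := by
  simp only [mip, Matrix.neg_apply, neg_mul, Finset.sum_neg_distrib]

lemma mip_sub_right (X Y Z : Matrix (Fin d) (Fin d) ℝ) : mip X (Y - Z) = mip X Y - mip X Z := by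
  simp only [mip, Matrix.sub_apply, mul_sub, Finset.sum_sub_distrib]

lemma mip_nonneg_of_entries_nonneg {X Y : Matrix (Fin d) (Fin d) ℝ}
    (hX : ∀ i j, 0 ≤ X i j) (hY : ∀ i j, 0 ≤ Y i j) : 0 ≤ mip X Y :=
  Finset.sum_nonneg fun i _ ↦ Finset.sum_nonneg fun j _ ↦ mul_nonneg (hX i j) (hY i j)

/-- `⟨X, Y⟩` is the sum of the entries of the Hadamard product `X ⊙ Y`, which is positive
semidefinite by the Schur product theorem. -/
lemma Matrix.PosSemidef.mip_nonneg {X Y : Matrix (Fin d) (Fin d) ℝ}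
    (hX : X.PosSemidef) (hY : Y.PosSemidef) : 0 ≤ mip X Y := by
  have h := (hX.hadamard hY).dotProduct_mulVec_nonneg (fun _ ↦ 1)
  simpa [mip, dotProduct, mulVec] using h

lemma Matrix.IsHermitian.mip_eq_zero_of_mul_eq_zero {S Y : Matrix (Fin d) (Fin d) ℝ}
    (hS : S.IsHermitian) (hSY : S * Y = 0) : mip S Y = 0 := by
  calc mip S Y = ∑ j, (S * Y) j j := by
        simp only [mip, mul_apply]
        rw [Finset.sum_comm]
        refine Finset.sum_congr rfl fun j _ ↦ Finset.sum_congr rfl fun i _ ↦ ?_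
        rw [← hS.apply, star_trivial]
    _ = 0 := by simp [hSY]

lemma mip_le_of_complementary_slackness {U Y Yhat : Matrix (Fin d) (Fin d) ℝ}
    (hU : ∀ i j, 0 ≤ U i j) (hUY : ∀ i j, U i j * (Yhat i j - 1) = 0) (hY : ∀ i j, Y i j ≤ 1) :
    mip U Y ≤ mip U Yhat := by
  refine Finset.sum_le_sum fun i _ ↦ Finset.sum_le_sum fun j _ ↦ ?_
  have hUYhat : U i j * Yhat i j = U i j := by linarith [hUY i j, mul_sub (U i j) (Yhat i j) 1]
  rw [hUYhat]
  exact mul_le_of_le_one_right (hU i j) (hY i j)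

end mip

theorem dual_complementarity_for_uniqueness_general
    {n : ℕ} (M : Matrix (Fin n) (Fin n) ℝ) (lam : ℝ)
    (Yhat : Matrix (Fin n) (Fin n) ℝ)
    (U L : Matrix (Fin n) (Fin n) ℝ)
    (hU : ∀ i j, 0 ≤ U i j) (hL : ∀ i j, 0 ≤ L i j)
    (hLY : ∀ i j, L i j * Yhat i j = 0)
    (hUY : ∀ i j, U i j * (Yhat i j - 1) = 0)
    (hnsd : (-(M - lam • (1 : Matrix (Fin n) (Fin n) ℝ) - U + L)).PosSemidef)
    (hcs : (M - lam • (1 : Matrix (Fin n) (Fin n) ℝ) - U + L) * Yhat = 0)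
    (Y' : Matrix (Fin n) (Fin n) ℝ) (hY' : FeasSDP Y')
    (horth : mip (M - lam • (1 : Matrix (Fin n) (Fin n) ℝ)) (Y' - Yhat) = 0) :
    mip L Y' = 0 := by
  set S := M - lam • (1 : Matrix (Fin n) (Fin n) ℝ) - U + L with hS
  have hSYhat : mip S Yhat = 0 :=
    (by simpa using hnsd.isHermitian.neg : S.IsHermitian).mip_eq_zero_of_mul_eq_zero hcs
  have hSY' : mip S Y' ≤ 0 := by
    have h := hnsd.mip_nonneg hY'.1
    rw [mip_neg_left] at h
    linarith
  have hLYhat : mip L Yhat = 0 := by simp [mip, hLY]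
  have hUle : mip U Y' ≤ mip U Yhat :=
    mip_le_of_complementary_slackness hU hUY fun i j ↦ (hY'.2 i j).2
  have hLY'_nonneg : 0 ≤ mip L Y' := mip_nonneg_of_entries_nonneg hL fun i j ↦ (hY'.2 i j).1
  have hexpand : mip S (Y' - Yhat) = mip (M - lam • (1 : Matrix (Fin n) (Fin n) ℝ)) (Y' - Yhat)
      - (mip U Y' - mip U Yhat) + (mip L Y' - mip L Yhat) := by
    rw [hS, mip_add_left, mip_sub_left, mip_sub_right U, mip_sub_right L]
  rw [mip_sub_right, horth] at hexpand
  linarith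

/-- Uniqueness lemma: if `Ŷ ∈ F_n` satisfies the KKT conditions with dual variables
`U, L ≥ 0`, then any `Y' ∈ F_n` with `⟨M − λI, Y' − Ŷ⟩ = 0` satisfies `⟨L, Y'⟩ = 0`. -/
theorem dual_complementarity_for_uniqueness
    {n : ℕ} (M : Matrix (Fin n) (Fin n) ℝ) (hM : M.IsHermitian) (lam : ℝ)
    (Yhat : Matrix (Fin n) (Fin n) ℝ) (hYhat : FeasSDP Yhat)
    (U L : Matrix (Fin n) (Fin n) ℝ)
    (hU : ∀ i j, 0 ≤ U i j) (hL : ∀ i j, 0 ≤ L i j)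
    (hLY : ∀ i j, L i j * Yhat i j = 0)
    (hUY : ∀ i j, U i j * (Yhat i j - 1) = 0)
    (hnsd : (-(M - lam • (1 : Matrix (Fin n) (Fin n) ℝ) - U + L)).PosSemidef)
    (hcs : (M - lam • (1 : Matrix (Fin n) (Fin n) ℝ) - U + L) * Yhat = 0)
    (Y' : Matrix (Fin n) (Fin n) ℝ) (hY' : FeasSDP Y')
    (horth : mip (M - lam • (1 : Matrix (Fin n) (Fin n) ℝ)) (Y' - Yhat) = 0) :
    mip L Y' = 0 :=
  dual_complementarity_for_uniqueness_general M lam Yhat U L hU hL hLY hUY hnsd hcs Y' hY' horth
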